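/- In the min-based reduction instance built from a simple graph H = (V, E) and an odd integer k ≥ 3, under min-EQ utilities or under min-AL utilities with fixed weight w ≥ n^4, the following holds: let P be the player set of any one of the circulant gadgets (a set P_v, P_e, or P_{v,e}) and let p* be its distinguished player (the unique player of P that has friends outside P). If a coalition C ⊆ N blocks the coalition structure Γ, then C ∩ P ⊆ {p*}. -/

import Mathlib

open Finset
open scoped Classical

section AHGDefs

variable {N : Type*} [Fintype N] [DecidableEq N]

/-- The set of friends of player `i` inside coalition `C`. -/
noncomputable def friendsIn (G : SimpleGraph N) (C : Finset N) (i : N) : Finset N :=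
  C.filter fun j => G.Adj i j

/-- The friend-oriented valuation of coalition `C` by player `i`:
`val_i(C) = n·|F_i ∩ C| − |E_i ∩ C|`. -/
noncomputable def fval (G : SimpleGraph N) (C : Finset N) (i : N) : ℤ :=
  (Fintype.card N : ℤ) * ((friendsIn G C i).card : ℤ)
    - ((C.filter fun j => ¬ G.Adj i j ∧ j ≠ i).card : ℤ)

/-- Average-based equal-treatment utility. -/
noncomputable def utilAvgEQ (G : SimpleGraph N) (C : Finset N) (i : N) : ℚ :=
  (∑ c ∈ insert i (friendsIn G C i), (fval G C c : ℚ)) /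
    ((insert i (friendsIn G C i)).card : ℚ)

/-- Average-based altruistic-treatment utility with weight `w`. -/
noncomputable def utilAvgAL (G : SimpleGraph N) (w : ℚ) (C : Finset N) (i : N) : ℚ :=
  (fval G C i : ℚ) +
    w * (if (friendsIn G C i).Nonempty then
          (∑ c ∈ friendsIn G C i, (fval G C c : ℚ)) / ((friendsIn G C i).card : ℚ)
         else 0)

/-- Min-based equal-treatment utility. -/
noncomputable def utilMinEQ (G : SimpleGraph N) (C : Finset N) (i : N) : ℤ :=
  (insert i (friendsIn G C i)).inf' (insert_nonempty _ _) (fval G C)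

/-- Min-based altruistic-treatment utility with weight `w`. -/
noncomputable def utilMinAL (G : SimpleGraph N) (w : ℤ) (C : Finset N) (i : N) : ℤ :=
  fval G C i +
    w * (if h : (friendsIn G C i).Nonempty then (friendsIn G C i).inf' h (fval G C) else 0)

/-- A coalition structure (partition of the players), given as the map sending
each player to its coalition. -/
structure CoalitionStructure (N : Type*) [Fintype N] [DecidableEq N] where
  part : N → Finset N
  mem_part : ∀ i, i ∈ part i
  part_eq : ∀ i j, j ∈ part i → part j = part i

/-- A (nonempty) coalition `C` blocks the coalition structure `Γ`. -/
def Blocks {α : Type*} [LT α] (util : Finset N → N → α) (Γ : CoalitionStructure N)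
    (C : Finset N) : Prop :=
  C.Nonempty ∧ ∀ i ∈ C, util (Γ.part i) i < util C i

/-- Core stability: no nonempty coalition blocks `Γ`. -/
def CoreStable {α : Type*} [LT α] (util : Finset N → N → α)
    (Γ : CoalitionStructure N) : Prop :=
  ¬ ∃ C : Finset N, Blocks util Γ C

/-- Cyclic distance between two positions on a cycle of length `k'`. -/
def cycDist (k' : ℕ) (a b : Fin k') : ℕ :=
  min ((a.val + k' - b.val) % k') ((b.val + k' - a.val) % k')

/-- `P` carries an `(r,k')`-circulant gadget of `G`: its `k'` players are arranged
along a cycle of length `k'`, and two players are adjacent iff their distance along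
the cycle is at most `r/2` (so each player has `r` friends in the gadget). -/
def IsCirculantGadget (G : SimpleGraph N) (r k' : ℕ) (P : Finset N) : Prop :=
  ∃ f : Fin k' → N, Function.Injective f ∧ Finset.univ.image f = P ∧
    ∀ a b : Fin k', (G.Adj (f a) (f b) ↔ (a ≠ b ∧ cycDist k' a b ≤ r / 2))

/-- The gadget size `k' = k·(k choose 2) + k + 1` of the min-based reduction. -/
def minK' (k : ℕ) : ℕ := k * Nat.choose k 2 + k + 1

variable {V : Type*} [Fintype V] [DecidableEq V]

/-- The min-based reduction instance built from the graph `H` and an odd `k ≥ 3`: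
`G` is the constructed network of friends on the player set `N`; `Pv v`, `Pe e`, and
`Pve v e` are the player sets of the `(k−1,k')`-circulant vertex, edge, and incidence
gadgets with distinguished players `vp v`, `ep e`, and `bp v e` respectively; `Ae e`
are the `k−3` dummy players of edge `e`, forming a clique. Each `bp v e` is further
adjacent to `vp v` and `ep e`, each dummy in `Ae e` to `ep e` and to both incidence
players of `e`, and there are no other edges. -/
structure MinReduction (H : SimpleGraph V) (k : ℕ) (G : SimpleGraph N)
    (Pv : V → Finset N) (Pe : Sym2 V → Finset N) (Pve : V → Sym2 V → Finset N)
    (Ae : Sym2 V → Finset N) (vp : V → N) (ep : Sym2 V → N) (bp : V → Sym2 V → N) :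
    Prop where
  circ_v : ∀ v : V, IsCirculantGadget G (k - 1) (minK' k) (Pv v)
  circ_e : ∀ e ∈ H.edgeSet, IsCirculantGadget G (k - 1) (minK' k) (Pe e)
  circ_ve : ∀ (v : V), ∀ e ∈ H.edgeSet, v ∈ e →
    IsCirculantGadget G (k - 1) (minK' k) (Pve v e)
  vp_mem : ∀ v : V, vp v ∈ Pv v
  ep_mem : ∀ e ∈ H.edgeSet, ep e ∈ Pe e
  bp_mem : ∀ (v : V), ∀ e ∈ H.edgeSet, v ∈ e → bp v e ∈ Pve v e
  Ae_card : ∀ e ∈ H.edgeSet, (Ae e).card = k - 3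
  Ae_clique : ∀ e ∈ H.edgeSet, ∀ a ∈ Ae e, ∀ b ∈ Ae e, a ≠ b → G.Adj a b
  disj_vv : ∀ v w : V, v ≠ w → Disjoint (Pv v) (Pv w)
  disj_ee : ∀ e ∈ H.edgeSet, ∀ f ∈ H.edgeSet, e ≠ f → Disjoint (Pe e) (Pe f)
  disj_bb : ∀ (v : V), ∀ e ∈ H.edgeSet, v ∈ e → ∀ (w : V), ∀ f ∈ H.edgeSet, w ∈ f →
    (v, e) ≠ (w, f) → Disjoint (Pve v e) (Pve w f)
  disj_aa : ∀ e ∈ H.edgeSet, ∀ f ∈ H.edgeSet, e ≠ f → Disjoint (Ae e) (Ae f)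
  disj_v_e : ∀ (v : V), ∀ e ∈ H.edgeSet, Disjoint (Pv v) (Pe e)
  disj_v_b : ∀ (v w : V), ∀ f ∈ H.edgeSet, w ∈ f → Disjoint (Pv v) (Pve w f)
  disj_v_a : ∀ (v : V), ∀ e ∈ H.edgeSet, Disjoint (Pv v) (Ae e)
  disj_e_b : ∀ e ∈ H.edgeSet, ∀ (w : V), ∀ f ∈ H.edgeSet, w ∈ f →
    Disjoint (Pe e) (Pve w f)
  disj_e_a : ∀ e ∈ H.edgeSet, ∀ f ∈ H.edgeSet, Disjoint (Pe e) (Ae f)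
  disj_b_a : ∀ (v : V), ∀ e ∈ H.edgeSet, v ∈ e → ∀ f ∈ H.edgeSet,
    Disjoint (Pve v e) (Ae f)
  cover : ∀ x : N, (∃ v : V, x ∈ Pv v) ∨ (∃ e ∈ H.edgeSet, x ∈ Pe e) ∨
    (∃ (v : V), ∃ e ∈ H.edgeSet, v ∈ e ∧ x ∈ Pve v e) ∨ (∃ e ∈ H.edgeSet, x ∈ Ae e)
  adj_bv : ∀ (v : V), ∀ e ∈ H.edgeSet, v ∈ e → G.Adj (bp v e) (vp v)
  adj_be : ∀ (v : V), ∀ e ∈ H.edgeSet, v ∈ e → G.Adj (bp v e) (ep e)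
  adj_ae : ∀ e ∈ H.edgeSet, ∀ a ∈ Ae e, G.Adj a (ep e)
  adj_ab : ∀ (v : V), ∀ e ∈ H.edgeSet, v ∈ e → ∀ a ∈ Ae e, G.Adj a (bp v e)
  adj_cases : ∀ x y : N, G.Adj x y →
    (∃ v : V, x ∈ Pv v ∧ y ∈ Pv v) ∨
    (∃ e ∈ H.edgeSet, x ∈ Pe e ∧ y ∈ Pe e) ∨
    (∃ (v : V), ∃ e ∈ H.edgeSet, v ∈ e ∧ x ∈ Pve v e ∧ y ∈ Pve v e) ∨
    (∃ e ∈ H.edgeSet, x ∈ Ae e ∧ y ∈ Ae e) ∨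
    (∃ (v : V), ∃ e ∈ H.edgeSet, v ∈ e ∧
      ((x = bp v e ∧ y = vp v) ∨ (y = bp v e ∧ x = vp v))) ∨
    (∃ (v : V), ∃ e ∈ H.edgeSet, v ∈ e ∧
      ((x = bp v e ∧ y = ep e) ∨ (y = bp v e ∧ x = ep e))) ∨
    (∃ e ∈ H.edgeSet, (x ∈ Ae e ∧ y = ep e) ∨ (y ∈ Ae e ∧ x = ep e)) ∨
    (∃ (v : V), ∃ e ∈ H.edgeSet, v ∈ e ∧
      ((x ∈ Ae e ∧ y = bp v e) ∨ (y ∈ Ae e ∧ x = bp v e)))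

/-- `Γ` is the coalition structure of the min-based reduction instance: its coalitions
are exactly the gadget player sets and the dummy sets. -/
def IsMinGamma (H : SimpleGraph V) (Pv : V → Finset N) (Pe : Sym2 V → Finset N)
    (Pve : V → Sym2 V → Finset N) (Ae : Sym2 V → Finset N)
    (Γ : CoalitionStructure N) : Prop :=
  (∀ v : V, ∀ i ∈ Pv v, Γ.part i = Pv v) ∧
  (∀ e ∈ H.edgeSet, ∀ i ∈ Pe e, Γ.part i = Pe e) ∧
  (∀ (v : V), ∀ e ∈ H.edgeSet, v ∈ e → ∀ i ∈ Pve v e, Γ.part i = Pve v e) ∧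
  (∀ e ∈ H.edgeSet, ∀ i ∈ Ae e, Γ.part i = Ae e)
end AHGDefs

/-!
Every player of a circulant gadget `P` has the same number of friends in `P`, so under `Γ` all of
`P` receive one and the same valuation `b`. A player's valuation weighs one friend more than all its
enemies together, so a player of `P` other than the distinguished `p` (all of whose friends lie in
`P`) that values a coalition `C` at least `b` must have all its friends in `C`. Blocking forces this
valuation bound: directly under min-EQ, and under min-AL because the weight `w ≥ n²` makes a
friend's valuation dominate. Since the circulant stays connected without `p`, a blocking `C`
meeting `P` outside `p` contains `P`; but then every player of `P` other than `p` meets all the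
enemies it had in `P` and no new friends, so values `C` at most `b`, and cannot strictly improve.
-/
open Fin.CommRing

theorem cycDist_eq_min {k' : ℕ} [NeZero k'] {a b : Fin k'} (hab : a ≠ b) :
    cycDist k' a b = min (k' - (b - a).val) (b - a).val := by
  have hsub : ∀ x y : Fin k', (x.val + k' - y.val) % k' = (x - y).val := fun x y => by
    rw [Fin.val_sub]; congr 1; omega
  rw [cycDist, hsub, hsub, ← neg_sub b a, Fin.val_neg, if_neg (sub_ne_zero.mpr hab.symm)]

theorem card_filter_cycDist_le {k' m : ℕ} [NeZero k'] (hm : 2 * m < k') (a : Fin k') :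
    #{b | a ≠ b ∧ cycDist k' a b ≤ m} = 2 * m := by
  have hdisj : Disjoint (Ioc 0 m) (Ico (k' - m) k') :=
    disjoint_left.mpr fun t h h' => by simp only [mem_Ioc, mem_Ico] at h h'; omega
  have hcard : #(Ioc 0 m ∪ Ico (k' - m) k') = 2 * m := by
    rw [card_union_of_disjoint hdisj, Nat.card_Ioc, Nat.card_Ico]; omega
  rw [← hcard]
  refine card_bij (fun b _ => (b - a).val) ?_ ?_ ?_
  · intro b hb
    obtain ⟨hab, hd⟩ := (mem_filter.mp hb).2
    rw [cycDist_eq_min hab] at hd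
    have hba : (b - a).val ≠ 0 := Fin.val_ne_zero_iff.mpr (sub_ne_zero.mpr hab.symm)
    have := (b - a).isLt
    simp only [mem_union, mem_Ioc, mem_Ico]
    omega
  · intro b _ b' _ h
    exact sub_left_injective (Fin.ext h)
  · intro t ht
    simp only [mem_union, mem_Ioc, mem_Ico] at ht
    have hv : ((t : Fin k') : ℕ) = t := Fin.val_cast_of_lt (by omega)
    have hab : a ≠ a + t := fun h => by
      rw [left_eq_add] at h
      rw [h] at hv
      simp at hv
      omega
    refine ⟨a + t, mem_filter.mpr ⟨mem_univ _, hab, ?_⟩, by rw [add_sub_cancel_left, hv]⟩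
    rw [cycDist_eq_min hab, add_sub_cancel_left, hv]
    omega

theorem Fin.add_natCast_mem {n : ℕ} [NeZero n] {S : Set (Fin n)} {a q : Fin n} (ha : a ∈ S)
    (hS : ∀ b ∈ S, b ≠ q → b + 1 ∈ S) {u : ℕ} (hu : u ≤ (q - a).val) : a + u ∈ S := by
  induction u with
  | zero => simpa using ha
  | succ u ih =>
    have hne : a + u ≠ q := fun h => by
      have : ((u : Fin n) : ℕ) = (q - a).val := by rw [← h, add_sub_cancel_left]
      rw [Fin.val_cast_of_lt (by omega)] at this
      omega
    rw [Nat.cast_succ, ← add_assoc]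
    exact hS _ (ih (by omega)) hne

theorem Fin.mem_of_add_one_mem_of_sub_one_mem {n : ℕ} [NeZero n] {S : Set (Fin n)} {a q : Fin n}
    (ha : a ∈ S) (haq : a ≠ q) (hS : ∀ b ∈ S, b ≠ q → b + 1 ∈ S ∧ b - 1 ∈ S) (b : Fin n) :
    b ∈ S := by
  by_cases hb : (b - a).val ≤ (q - a).val
  · simpa using Fin.add_natCast_mem ha (fun c hc hcq => (hS c hc hcq).1) hb
  -- otherwise walk backwards, i.e. forwards in `-S`
  have hab : a ≠ b := by rintro rfl; simp at hb
  have hval : ∀ {c : Fin n}, a ≠ c → (a - c).val = n - (c - a).val := fun {c} h => by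
    rw [← neg_sub c a, Fin.val_neg, if_neg (sub_ne_zero.mpr h.symm)]
  have := Fin.add_natCast_mem (S := {c | -c ∈ S}) (a := -a) (q := -q) (u := (a - b).val)
    (by simpa using ha) (fun c hc hcq => by
      simpa [neg_add_eq_sub] using (hS _ hc fun h => hcq (by rw [← h, neg_neg])).2)
    (by rw [neg_sub_neg, hval hab, hval haq]; have := (b - a).isLt; omega)
  simpa using this

section Valuation

variable {N : Type*} {G : SimpleGraph N} {C P : Finset N} {i j : N} {b w : ℤ}

@[simp] theorem mem_friendsIn : j ∈ friendsIn G C i ↔ j ∈ C ∧ G.Adj i j :=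
  mem_filter

theorem friendsIn_subset_friendsIn (h : ∀ y, G.Adj i y → y ∈ P) :
    friendsIn G C i ⊆ friendsIn G P i := fun y hy => by
  rw [mem_friendsIn] at hy ⊢
  exact ⟨h y hy.2, hy.2⟩

variable [DecidableEq N]

theorem insert_friendsIn_subset (hi : i ∈ C) : insert i (friendsIn G C i) ⊆ C :=
  insert_subset hi (filter_subset _ _)

variable [Fintype N]

theorem fval_le_mul_card : fval G C i ≤ Fintype.card N * #(friendsIn G C i) := by
  unfold fval; linarith [(#(C.filter fun j => ¬ G.Adj i j ∧ j ≠ i)).cast_nonneg (α := ℤ)]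

theorem fval_le_sq : fval G C i ≤ (Fintype.card N : ℤ) ^ 2 := by
  have : (#(friendsIn G C i) : ℤ) ≤ Fintype.card N := by exact_mod_cast card_le_univ _
  nlinarith [fval_le_mul_card (G := G) (C := C) (i := i), (Fintype.card N).cast_nonneg (α := ℤ)]

-- `i` is not its own enemy, so its enemies cost less than one friend.
theorem mul_card_sub_one_lt_fval :
    Fintype.card N * ((#(friendsIn G C i) : ℤ) - 1) < fval G C i := by
  have hen : #(C.filter fun j => ¬ G.Adj i j ∧ j ≠ i) < Fintype.card N :=
    card_lt_univ_of_notMem (x := i) (by simp)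
  unfold fval; linarith [(by exact_mod_cast hen :
    (#(C.filter fun j => ¬ G.Adj i j ∧ j ≠ i) : ℤ) < Fintype.card N)]

theorem friendsIn_subset_of_fval_le (hsub : friendsIn G C i ⊆ friendsIn G P i)
    (hle : fval G P i ≤ fval G C i) : friendsIn G P i ⊆ C := by
  have hlt := (mul_card_sub_one_lt_fval (G := G) (C := P) (i := i)).trans_le
    (hle.trans fval_le_mul_card)
  have hcard : #(friendsIn G P i) ≤ #(friendsIn G C i) := by
    have := lt_of_mul_lt_mul_left hlt (Fintype.card N).cast_nonneg (α := ℤ); omega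
  rw [← eq_of_subset_of_card_le hsub hcard]
  exact filter_subset _ _

theorem fval_le_fval_of_subset (hPC : P ⊆ C) (hsub : friendsIn G C i ⊆ friendsIn G P i) :
    fval G C i ≤ fval G P i := by
  have hfr : (#(friendsIn G C i) : ℤ) ≤ #(friendsIn G P i) := by exact_mod_cast card_le_card hsub
  have hen : (#(P.filter fun j => ¬ G.Adj i j ∧ j ≠ i) : ℤ) ≤
      #(C.filter fun j => ¬ G.Adj i j ∧ j ≠ i) := by
    exact_mod_cast card_le_card (filter_subset_filter _ hPC)
  unfold fval
  nlinarith [(Fintype.card N).cast_nonneg (α := ℤ)]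

theorem fval_eq_of_card_friendsIn {d : ℕ} (hi : i ∈ P) (hd : #(friendsIn G P i) = d) :
    fval G P i = Fintype.card N * d - (#P - 1 - d) := by
  have hen : P.filter (fun j => ¬ G.Adj i j ∧ j ≠ i) = P \ insert i (friendsIn G P i) := by
    ext j; simp only [mem_filter, mem_sdiff, mem_insert, mem_friendsIn]; tauto
  have hsub := insert_friendsIn_subset (G := G) hi
  have hcard := card_sdiff_of_subset hsub
  rw [card_insert_of_notMem (by simp), hd] at hcard
  have := card_le_card hsub
  rw [card_insert_of_notMem (by simp), hd] at this
  rw [fval, hen, hcard, hd]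
  push_cast [show d + 1 ≤ #P from this]
  ring

theorem utilMinEQ_le_fval : utilMinEQ G C i ≤ fval G C i :=
  inf'_le _ (mem_insert_self i _)

theorem utilMinEQ_eq_of_fval_eq (hb : ∀ c ∈ C, fval G C c = b) (hi : i ∈ C) :
    utilMinEQ G C i = b :=
  (inf'_congr _ rfl fun c hc => hb c (insert_friendsIn_subset hi hc)).trans (inf'_const _ _)

theorem utilMinAL_eq_of_fval_eq (hb : ∀ c ∈ C, fval G C c = b) (hi : i ∈ C)
    (hne : (friendsIn G C i).Nonempty) : utilMinAL G w C i = b + w * b := by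
  rw [utilMinAL, dif_pos hne, hb i hi,
    (inf'_congr hne rfl fun c hc => hb c (filter_subset _ _ hc)).trans (inf'_const _ _)]

theorem utilMinAL_le (hw : 0 ≤ w) (hj : j ∈ friendsIn G C i) :
    utilMinAL G w C i ≤ fval G C i + w * fval G C j := by
  rw [utilMinAL, dif_pos ⟨j, hj⟩]
  gcongr
  exact inf'_le _ hj

end Valuation

section Circulant

variable {N : Type*} [DecidableEq N] {G : SimpleGraph N} {P : Finset N} {p : N} {r k' : ℕ}

/-- Every set containing a player of `P` other than `p`, and with each such player all of its
friends in `P`, contains `P`. -/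
def SpreadsOff (G : SimpleGraph N) (P : Finset N) (p : N) : Prop :=
  ∀ S : Finset N, (∀ z ∈ S, z ∈ P → z ≠ p → friendsIn G P z ⊆ S) →
    ∀ x ∈ S, x ∈ P → x ≠ p → P ⊆ S

theorem IsCirculantGadget.card_friendsIn (h : IsCirculantGadget G r k' P) (hr : r < k') {c : N}
    (hc : c ∈ P) : #(friendsIn G P c) = 2 * (r / 2) := by
  obtain ⟨f, hf, rfl, hadj⟩ := h
  obtain ⟨a, -, rfl⟩ := mem_image.mp hc
  have : NeZero k' := ⟨a.pos.ne'⟩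
  rw [friendsIn, filter_image, card_image_of_injective _ hf]
  simp_rw [hadj]
  exact card_filter_cycDist_le (by omega) a

theorem IsCirculantGadget.spreadsOff (h : IsCirculantGadget G r k' P) (hr : 2 ≤ r) (hp : p ∈ P) :
    SpreadsOff G P p := by
  obtain ⟨f, hf, rfl, hadj⟩ := h
  intro S hS x hxS hxP hxp
  obtain ⟨a, -, rfl⟩ := mem_image.mp hxP
  obtain ⟨q, -, rfl⟩ := mem_image.mp hp
  have haq : a ≠ q := by rintro rfl; exact hxp rfl
  have : NeZero k' := ⟨a.pos.ne'⟩
  have : Nontrivial (Fin k') := ⟨⟨a, q, haq⟩⟩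
  have hsucc : ∀ b, G.Adj (f b) (f (b + 1)) := fun b => by
    have hb : b ≠ b + 1 := by simp
    refine (hadj _ _).2 ⟨hb, ?_⟩
    rw [cycDist_eq_min hb, add_sub_cancel_left, Fin.val_one']
    exact (min_le_right _ _).trans ((Nat.mod_le 1 k').trans (by omega))
  have hmem : ∀ b, f b ∈ image f univ := fun b => mem_image_of_mem f (mem_univ b)
  have hall := Fin.mem_of_add_one_mem_of_sub_one_mem (S := {b | f b ∈ S}) hxS haq fun b hb hbq => by
    have hsub := hS (f b) hb (hmem b) (hf.ne hbq)
    refine ⟨hsub (mem_friendsIn.mpr ⟨hmem _, hsucc b⟩), hsub (mem_friendsIn.mpr ⟨hmem _, ?_⟩)⟩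
    simpa using (hsucc (b - 1)).symm
  rintro _ hy
  obtain ⟨b, -, rfl⟩ := mem_image.mp hy
  exact hall b

end Circulant

section Gadget

variable {N : Type*} [Fintype N] [DecidableEq N] {G : SimpleGraph N} {Γ : CoalitionStructure N}
  {P C : Finset N} {p x : N} {b w : ℤ}

theorem lt_fval_of_blocks_minEQ (hB : Blocks (utilMinEQ G) Γ C) (hΓ : ∀ i ∈ P, Γ.part i = P)
    (hb : ∀ c ∈ P, fval G P c = b) {i : N} (hi : i ∈ C) (hiP : i ∈ P) : b < fval G C i := by
  have hlt := hB.2 i hi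
  rw [hΓ i hiP, utilMinEQ_eq_of_fval_eq hb hiP] at hlt
  exact hlt.trans_le utilMinEQ_le_fval

theorem friendsIn_nonempty_of_blocks_minAL (hB : Blocks (utilMinAL G w) Γ C)
    (hΓ : ∀ i ∈ P, Γ.part i = P) (hb : ∀ c ∈ P, fval G P c = b)
    (hw : (Fintype.card N : ℤ) ^ 2 ≤ w) (hb0 : 0 < b) {c : N} (hc : c ∈ C) (hcP : c ∈ P)
    (hne : (friendsIn G P c).Nonempty) : (friendsIn G C c).Nonempty := by
  by_contra hempty
  have hlt := hB.2 c hc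
  rw [hΓ c hcP, utilMinAL_eq_of_fval_eq hb hcP hne, utilMinAL, dif_neg hempty] at hlt
  nlinarith [fval_le_sq (G := G) (C := C) (i := c)]

theorem le_fval_of_blocks_minAL (hB : Blocks (utilMinAL G w) Γ C)
    (hΓ : ∀ i ∈ P, Γ.part i = P) (hb : ∀ c ∈ P, fval G P c = b)
    (hw : (Fintype.card N : ℤ) ^ 2 ≤ w) (hb0 : 0 ≤ b) {c j : N} (hc : c ∈ C) (hcP : c ∈ P)
    (hne : (friendsIn G P c).Nonempty) (hj : j ∈ friendsIn G C c) : b ≤ fval G C j := by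
  have hlt := hB.2 c hc
  rw [hΓ c hcP, utilMinAL_eq_of_fval_eq hb hcP hne, utilMinAL, dif_pos ⟨j, hj⟩] at hlt
  -- lowering the minimum by one costs `w ≥ n²`, more than any valuation can gain
  by_contra! hj_lt
  have hmin : w * (friendsIn G C c).inf' ⟨j, hj⟩ (fval G C) ≤ w * (b - 1) :=
    mul_le_mul_of_nonneg_left (by linarith [inf'_le (fval G C) hj]) (by nlinarith)
  nlinarith [fval_le_sq (G := G) (C := C) (i := c)]

theorem subset_of_fval_le (hout : ∀ z ∈ P, z ≠ p → ∀ y, G.Adj z y → y ∈ P)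
    (hspread : SpreadsOff G P p) (hle : ∀ i ∈ C, i ∈ P → i ≠ p → fval G P i ≤ fval G C i)
    (hx : x ∈ C) (hxP : x ∈ P) (hxp : x ≠ p) : P ⊆ C :=
  hspread C (fun z hz hzP hzp => friendsIn_subset_of_fval_le
    (friendsIn_subset_friendsIn (hout z hzP hzp)) (hle z hz hzP hzp)) x hx hxP hxp

theorem eq_of_blocks_minEQ (hB : Blocks (utilMinEQ G) Γ C) (hΓ : ∀ i ∈ P, Γ.part i = P)
    (hb : ∀ c ∈ P, fval G P c = b) (hout : ∀ z ∈ P, z ≠ p → ∀ y, G.Adj z y → y ∈ P)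
    (hspread : SpreadsOff G P p) (hx : x ∈ C) (hxP : x ∈ P) : x = p := by
  by_contra hxp
  have hlow : ∀ i ∈ C, i ∈ P → b < fval G C i := fun i hi hiP =>
    lt_fval_of_blocks_minEQ hB hΓ hb hi hiP
  have hPC : P ⊆ C := subset_of_fval_le hout hspread
    (fun i hi hiP _ => (hb i hiP).symm ▸ (hlow i hi hiP).le) hx hxP hxp
  have hup := fval_le_fval_of_subset hPC (friendsIn_subset_friendsIn (hout x hxP hxp))
  linarith [hlow x hx hxP, hb x hxP]

theorem eq_of_blocks_minAL (hB : Blocks (utilMinAL G w) Γ C) (hw : (Fintype.card N : ℤ) ^ 2 ≤ w)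
    (hΓ : ∀ i ∈ P, Γ.part i = P) (hb : ∀ c ∈ P, fval G P c = b)
    (hout : ∀ z ∈ P, z ≠ p → ∀ y, G.Adj z y → y ∈ P) (hspread : SpreadsOff G P p)
    (hfriend : ∀ c ∈ P, ∃ j ∈ friendsIn G P c, j ≠ p) (hx : x ∈ C) (hxP : x ∈ P) : x = p := by
  by_contra hxp
  have hne : ∀ c ∈ P, (friendsIn G P c).Nonempty := fun c hc =>
    let ⟨j, hj, _⟩ := hfriend c hc; ⟨j, hj⟩
  have hb0 : 0 < b := by
    have hd : 1 ≤ #(friendsIn G P x) := card_pos.mpr (hne x hxP)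
    nlinarith [mul_card_sub_one_lt_fval (G := G) (C := P) (i := x), hb x hxP]
  -- a friend `c` of `i` in `C` lies in `P`, and blocking forces `c` to value its friends in `C`
  -- at least `b`
  have hlow : ∀ i ∈ C, i ∈ P → i ≠ p → b ≤ fval G C i := by
    intro i hi hiP hip
    obtain ⟨c, hc⟩ := friendsIn_nonempty_of_blocks_minAL hB hΓ hb hw hb0 hi hiP (hne i hiP)
    rw [mem_friendsIn] at hc
    have hcP := hout i hiP hip c hc.2
    exact le_fval_of_blocks_minAL hB hΓ hb hw hb0.le hc.1 hcP (hne c hcP)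
      (mem_friendsIn.mpr ⟨hi, hc.2.symm⟩)
  have hPC : P ⊆ C := subset_of_fval_le hout hspread
    (fun i hi hiP hip => (hb i hiP).symm ▸ hlow i hi hiP hip) hx hxP hxp
  have hup : ∀ i ∈ P, i ≠ p → fval G C i ≤ b := fun i hiP hip =>
    hb i hiP ▸ fval_le_fval_of_subset hPC (friendsIn_subset_friendsIn (hout i hiP hip))
  obtain ⟨j, hj, hjp⟩ := hfriend x hxP
  have hjP : j ∈ P := (mem_friendsIn.mp hj).1
  have hlt := hB.2 x hx
  rw [hΓ x hxP, utilMinAL_eq_of_fval_eq hb hxP (hne x hxP)] at hlt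
  have hw0 : 0 ≤ w := le_trans (by positivity) hw
  have hle := utilMinAL_le hw0 (mem_friendsIn.mpr ⟨hPC hjP, (mem_friendsIn.mp hj).2⟩)
  nlinarith [hup x hxP hxp, hup j hjP hjp]

end Gadget

section Reduction

variable {V N : Type*} {H : SimpleGraph V} {Pv : V → Finset N} {Pe : Sym2 V → Finset N}
  {Pve : V → Sym2 V → Finset N} {vp : V → N} {ep : Sym2 V → N} {bp : V → Sym2 V → N}
  {P : Finset N} {p : N}

/-- `P` is one of the circulant gadgets of the min-based reduction and `p` its distinguished
player. -/
inductive IsMinGadget (H : SimpleGraph V) (Pv : V → Finset N) (Pe : Sym2 V → Finset N)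
    (Pve : V → Sym2 V → Finset N) (vp : V → N) (ep : Sym2 V → N) (bp : V → Sym2 V → N) :
    Finset N → N → Prop
  | vertex (v : V) : IsMinGadget H Pv Pe Pve vp ep bp (Pv v) (vp v)
  | edge (e : Sym2 V) (he : e ∈ H.edgeSet) : IsMinGadget H Pv Pe Pve vp ep bp (Pe e) (ep e)
  | incidence (v : V) (e : Sym2 V) (he : e ∈ H.edgeSet) (hv : v ∈ e) :
      IsMinGadget H Pv Pe Pve vp ep bp (Pve v e) (bp v e)

namespace IsMinGadget

variable [DecidableEq N] {k : ℕ} {G : SimpleGraph N} {Ae : Sym2 V → Finset N}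

theorem mem (R : MinReduction H k G Pv Pe Pve Ae vp ep bp)
    (h : IsMinGadget H Pv Pe Pve vp ep bp P p) : p ∈ P :=
  h.rec R.vp_mem R.ep_mem R.bp_mem

theorem isCirculantGadget (R : MinReduction H k G Pv Pe Pve Ae vp ep bp)
    (h : IsMinGadget H Pv Pe Pve vp ep bp P p) :
    IsCirculantGadget G (k - 1) (minK' k) P :=
  h.rec R.circ_v R.circ_e R.circ_ve

theorem disjoint_dummies (R : MinReduction H k G Pv Pe Pve Ae vp ep bp)
    (h : IsMinGadget H Pv Pe Pve vp ep bp P p) {e : Sym2 V}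
    (he : e ∈ H.edgeSet) : Disjoint P (Ae e) := by
  cases h with
  | vertex v => exact R.disj_v_a v e he
  | edge e' he' => exact R.disj_e_a e' he' e he
  | incidence v e' he' hv => exact R.disj_b_a v e' he' hv e he

theorem unique (R : MinReduction H k G Pv Pe Pve Ae vp ep bp) {p' : N}
    (h : IsMinGadget H Pv Pe Pve vp ep bp P p) (h' : IsMinGadget H Pv Pe Pve vp ep bp P p') :
    p = p' := by
  have hmeet : ∀ {A B : Finset N} {a : N}, a ∈ A → A = B → ¬ Disjoint A B :=
    fun ha hAB hd => disjoint_left.mp hd ha (hAB ▸ ha)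
  generalize hPP : P = P' at h'
  cases h with
  | vertex v => cases h' with
    | vertex v' =>
      obtain rfl : v = v' := by_contra fun hvv => hmeet (R.vp_mem v) hPP (R.disj_vv v v' hvv)
      rfl
    | edge e' he' => exact absurd (R.disj_v_e v e' he') (hmeet (R.vp_mem v) hPP)
    | incidence v' e' he' hv' => exact absurd (R.disj_v_b v v' e' he' hv') (hmeet (R.vp_mem v) hPP)
  | edge e he => cases h' with
    | vertex v' => exact absurd (R.disj_v_e v' e he) (hmeet (R.vp_mem v') hPP.symm)
    | edge e' he' =>
      obtain rfl : e = e' :=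
        by_contra fun hee => hmeet (R.ep_mem e he) hPP (R.disj_ee e he e' he' hee)
      rfl
    | incidence v' e' he' hv' =>
      exact absurd (R.disj_e_b e he v' e' he' hv') (hmeet (R.ep_mem e he) hPP)
  | incidence v e he hv => cases h' with
    | vertex v' => exact absurd (R.disj_v_b v' v e he hv) (hmeet (R.vp_mem v') hPP.symm)
    | edge e' he' =>
      exact absurd (R.disj_e_b e' he' v e he hv) (hmeet (R.ep_mem e' he') hPP.symm)
    | incidence v' e' he' hv' =>
      obtain ⟨rfl, rfl⟩ : v = v' ∧ e = e' := by
        rw [← Prod.mk.injEq]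
        exact by_contra fun hne' =>
          hmeet (R.bp_mem v e he hv) hPP (R.disj_bb v e he hv v' e' he' hv' hne')
      rfl

variable [Fintype N] {Γ : CoalitionStructure N}

theorem part_eq (hΓ : IsMinGamma H Pv Pe Pve Ae Γ) (h : IsMinGadget H Pv Pe Pve vp ep bp P p) :
    ∀ i ∈ P, Γ.part i = P :=
  h.rec hΓ.1 hΓ.2.1 hΓ.2.2.1

theorem mem_of_adj (R : MinReduction H k G Pv Pe Pve Ae vp ep bp)
    (hΓ : IsMinGamma H Pv Pe Pve Ae Γ) (h : IsMinGadget H Pv Pe Pve vp ep bp P p)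
    {z y : N} (hz : z ∈ P) (hzp : z ≠ p) (hadj : G.Adj z y) : y ∈ P := by
  have hpart : ∀ {P' p'}, IsMinGadget H Pv Pe Pve vp ep bp P' p' → z ∈ P' → P' = P :=
    fun h' hz' => (h'.part_eq hΓ z hz').symm.trans (h.part_eq hΓ z hz)
  have hsame : ∀ {P' p'}, IsMinGadget H Pv Pe Pve vp ep bp P' p' → z ∈ P' → y ∈ P' → y ∈ P :=
    fun h' hz' hy => hpart h' hz' ▸ hy
  have hdist : ∀ {P' p'}, IsMinGadget H Pv Pe Pve vp ep bp P' p' → z ≠ p' := by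
    rintro P' p' h' rfl
    exact hzp (h.unique R (hpart h' (h'.mem R) ▸ h')).symm
  have hdummy : ∀ e ∈ H.edgeSet, z ∉ Ae e := fun e he =>
    disjoint_left.mp (h.disjoint_dummies R he) hz
  rcases R.adj_cases z y hadj with ⟨v, hz', hy⟩ | ⟨e, he, hz', hy⟩ | ⟨v, e, he, hv, hz', hy⟩ |
      ⟨e, he, hz', -⟩ | ⟨v, e, he, hv, ⟨rfl, -⟩ | ⟨-, rfl⟩⟩ | ⟨v, e, he, hv, ⟨rfl, -⟩ | ⟨-, rfl⟩⟩ |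
      ⟨e, he, ⟨hz', -⟩ | ⟨-, rfl⟩⟩ | ⟨v, e, he, hv, ⟨hz', -⟩ | ⟨-, rfl⟩⟩
  · exact hsame (.vertex v) hz' hy
  · exact hsame (.edge e he) hz' hy
  · exact hsame (.incidence v e he hv) hz' hy
  · exact absurd hz' (hdummy e he)
  · exact absurd rfl (hdist (.incidence v e he hv))
  · exact absurd rfl (hdist (.vertex v))
  · exact absurd rfl (hdist (.incidence v e he hv))
  · exact absurd rfl (hdist (.edge e he))
  · exact absurd hz' (hdummy e he)
  · exact absurd rfl (hdist (.edge e he))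
  · exact absurd hz' (hdummy e he)
  · exact absurd rfl (hdist (.incidence v e he hv))

end IsMinGadget

end Reduction

theorem min_blocking_meets_circulant_only_in_distinguished_general {V N : Type*}
    [Fintype N] [DecidableEq N]
    (H : SimpleGraph V) (k : ℕ) (hk : 3 ≤ k)
    (G : SimpleGraph N) (Pv : V → Finset N) (Pe : Sym2 V → Finset N)
    (Pve : V → Sym2 V → Finset N) (Ae : Sym2 V → Finset N)
    (vp : V → N) (ep : Sym2 V → N) (bp : V → Sym2 V → N)
    (R : MinReduction H k G Pv Pe Pve Ae vp ep bp)
    (w : ℤ) (hw : (Fintype.card N : ℤ) ^ 4 ≤ w)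
    (Γ : CoalitionStructure N) (hΓ : IsMinGamma H Pv Pe Pve Ae Γ)
    (P : Finset N) (p : N)
    (hP : (∃ v : V, P = Pv v ∧ p = vp v) ∨
          (∃ e ∈ H.edgeSet, P = Pe e ∧ p = ep e) ∨
          (∃ (v : V), ∃ e ∈ H.edgeSet, v ∈ e ∧ P = Pve v e ∧ p = bp v e))
    (C : Finset N)
    (hC : Blocks (utilMinEQ G) Γ C ∨ Blocks (utilMinAL G w) Γ C) :
    ∀ x ∈ C, x ∈ P → x = p := by
  intro x hx hxP
  have hgad : IsMinGadget H Pv Pe Pve vp ep bp P p := by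
    rcases hP with ⟨v, rfl, rfl⟩ | ⟨e, he, rfl, rfl⟩ | ⟨v, e, he, hv, rfl, rfl⟩
    exacts [.vertex v, .edge e he, .incidence v e he hv]
  have hcirc := hgad.isCirculantGadget R
  have hd : ∀ c ∈ P, #(friendsIn G P c) = 2 * ((k - 1) / 2) := fun c hc =>
    hcirc.card_friendsIn (by unfold minK'; omega) hc
  have hb := fun c hc => fval_eq_of_card_friendsIn (G := G) hc (hd c hc)
  have hout : ∀ z ∈ P, z ≠ p → ∀ y, G.Adj z y → y ∈ P := fun z hz hzp _ =>
    hgad.mem_of_adj R hΓ hz hzp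
  have hspread := hcirc.spreadsOff (by omega) (hgad.mem R)
  rcases hC with hB | hB
  · exact eq_of_blocks_minEQ hB (hgad.part_eq hΓ) hb hout hspread hx hxP
  · have hw2 : (Fintype.card N : ℤ) ^ 2 ≤ w :=
      (pow_le_pow_right₀ (by exact_mod_cast Fintype.card_pos_iff.mpr ⟨p⟩) (by norm_num)).trans hw
    refine eq_of_blocks_minAL hB hw2 (hgad.part_eq hΓ) hb hout hspread (fun c hc => ?_) hx hxP
    exact exists_mem_ne (by rw [hd c hc]; omega) p

/-- Claim 1: in the min-based reduction instance, under min-EQ or min-AL utilities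
(with weight `w ≥ n^4`), if `P` is the player set of one of the circulant gadgets
with distinguished player `p`, and a coalition `C` blocks `Γ`, then `C ∩ P ⊆ {p}`. -/
theorem min_blocking_meets_circulant_only_in_distinguished {V N : Type*}
    [Fintype V] [DecidableEq V] [Fintype N] [DecidableEq N]
    (H : SimpleGraph V) (k : ℕ) (hk : 3 ≤ k) (hodd : Odd k)
    (G : SimpleGraph N) (Pv : V → Finset N) (Pe : Sym2 V → Finset N)
    (Pve : V → Sym2 V → Finset N) (Ae : Sym2 V → Finset N)
    (vp : V → N) (ep : Sym2 V → N) (bp : V → Sym2 V → N)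
    (R : MinReduction H k G Pv Pe Pve Ae vp ep bp)
    (w : ℤ) (hw : (Fintype.card N : ℤ) ^ 4 ≤ w)
    (Γ : CoalitionStructure N) (hΓ : IsMinGamma H Pv Pe Pve Ae Γ)
    (P : Finset N) (p : N)
    (hP : (∃ v : V, P = Pv v ∧ p = vp v) ∨
          (∃ e ∈ H.edgeSet, P = Pe e ∧ p = ep e) ∨
          (∃ (v : V), ∃ e ∈ H.edgeSet, v ∈ e ∧ P = Pve v e ∧ p = bp v e))
    (C : Finset N)
    (hC : Blocks (utilMinEQ G) Γ C ∨ Blocks (utilMinAL G w) Γ C) :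
    ∀ x ∈ C, x ∈ P → x = p :=
  min_blocking_meets_circulant_only_in_distinguished_general H k hk G Pv Pe Pve Ae vp ep bp R w hw Γ
    hΓ P p hP C hC
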